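/- arXiv:2506.15494 — 2 statements merged into one kernel-verified Lean document; each statement's English description precedes it below -/
import Mathlib

section
/- Let W be a group containing a normal abelian subgroup T of finite index k such that T is torsion-free and the conjugation action of W on T has kernel exactly T (i.e., any element of W commuting with every element of T lies in T). Then T = {x ∈ W : ∀ y ∈ W, x * y^k = y^k * x}. -/
theorem stmt0 (W : Type*) [Group W] (T : Subgroup W) (hN : T.Normal)
    (hab : ∀ x ∈ T, ∀ y ∈ T, x * y = y * x)
    (htf : ∀ x ∈ T, ∀ n : ℕ, 0 < n → x ^ n = 1 → x = 1)
    (k : ℕ) (hkpos : 0 < k) (hk : T.index = k)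
    (hcent : Subgroup.centralizer (T : Set W) = T) :
    ∀ x : W, x ∈ T ↔ ∀ y : W, x * y ^ k = y ^ k * x := by
  intro x
  constructor
  · intro hx y
    have hy : y ^ k ∈ T := by
      have := T.pow_index_mem y
      rwa [hk] at this
    exact hab x hx _ hy
  · intro h
    rw [← hcent]
    intro t ht
    -- show t * x = x * t
    have hs : x * t * x⁻¹ ∈ T := hN.conj_mem t ht x
    have hpow : (x * t * x⁻¹) ^ k = t ^ k := by
      rw [conj_pow, h t, mul_assoc, mul_inv_cancel, mul_one]
    have htk : t ^ k ∈ T := T.pow_mem ht k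
    have hq : (x * t * x⁻¹) * t⁻¹ ∈ T := T.mul_mem hs (T.inv_mem ht)
    have hcomm : (x * t * x⁻¹) * t⁻¹ = t⁻¹ * (x * t * x⁻¹) := hab _ hs _ (T.inv_mem ht)
    have hq1 : ((x * t * x⁻¹) * t⁻¹) ^ k = 1 := by
      rw [(Commute.symm hcomm.symm).mul_pow, hpow, inv_pow, mul_inv_cancel]
    have := htf _ hq k hkpos hq1
    have hxe : x * t * x⁻¹ = t := by
      have := mul_eq_one_iff_eq_inv.mp this
      rwa [inv_inv] at this
    calc t * x = (x * t * x⁻¹) * x := by rw [hxe]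
    _ = x * t := by group
end

section
/- Let W₀ be a finite group and L a ℤ[W₀]-lattice (free abelian of finite rank as a group) such that every ℚ[W₀]-module endomorphism of ℚ ⊗_ℤ L is multiplication by a rational scalar. If C and C' are ℤ[W₀]-submodules of L of finite index that are isomorphic as ℤ[W₀]-modules, then there exist nonzero integers α and β with α • C = β • C' (as subsets of L). -/
/-!
Since `n • L ⊆ C` for `n = [L : C]`, the map `φ x = e (n • x)` is a `W₀`-equivariant endomorphism
of `L`. By the Schur hypothesis its rationalisation is a scalar `q`, so `q.den • φ = q.num • id` on
the lattice `L`. On `C` this reads `q.num • c = (q.den * n) • e c`, and as `e` is a bijection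
`C → C'` this gives `q.num • C = (q.den * n) • C'`.
-/

open scoped TensorProduct

theorem LinearMap.den_zsmul_eq_num_zsmul_of_baseChange_eq_smul {L : Type*} [AddCommGroup L]
    [Module.Flat ℤ L] {f : L →ₗ[ℤ] L} {q : ℚ} (hq : f.baseChange ℚ = q • LinearMap.id) (x : L) :
    (q.den : ℤ) • f x = q.num • x := by
  apply Module.Flat.tensorProduct_mk_injective ℤ L ℚ
  have hfx : (1 : ℚ) ⊗ₜ[ℤ] f x = q • (1 : ℚ) ⊗ₜ[ℤ] x := by
    simpa using LinearMap.congr_fun hq ((1 : ℚ) ⊗ₜ[ℤ] x)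
  simp only [TensorProduct.mk_apply, TensorProduct.tmul_smul, hfx, ← Int.cast_smul_eq_zsmul ℚ,
    smul_smul]
  rw [Int.cast_natCast, mul_comm, Rat.mul_den_eq_num]

namespace AddEquiv

variable {L : Type*} [AddCommGroup L] {C C' : AddSubgroup L}

theorem image_zsmul_eq_of_zsmul_eq (e : C ≃+ C') {a b : ℤ}
    (h : ∀ c : C, a • (c : L) = b • (e c : L)) :
    (fun x : L => a • x) '' (C : Set L) = (fun x : L => b • x) '' (C' : Set L) := by
  ext y
  constructor
  · rintro ⟨c, hc, rfl⟩
    exact ⟨e ⟨c, hc⟩, (e ⟨c, hc⟩).2, (h ⟨c, hc⟩).symm⟩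
  · rintro ⟨c', hc', rfl⟩
    exact ⟨e.symm ⟨c', hc'⟩, (e.symm ⟨c', hc'⟩).2, by simpa using h (e.symm ⟨c', hc'⟩)⟩

def zsmulExtend (e : C ≃+ C') (n : ℤ) (hn : ∀ x : L, n • x ∈ C) : L →ₗ[ℤ] L :=
  (C'.subtype.comp (e.toAddMonoidHom.comp ((zsmulAddGroupHom n).codRestrict C hn))).toIntLinearMap

variable (e : C ≃+ C') {n : ℤ} (hn : ∀ x : L, n • x ∈ C)

theorem zsmulExtend_apply (x : L) : e.zsmulExtend n hn x = e ⟨n • x, hn x⟩ := rfl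

theorem zsmulExtend_apply_coe (c : C) : e.zsmulExtend n hn c = n • (e c : L) := by
  change ((e (n • c) : C') : L) = _
  rw [map_zsmul, AddSubgroup.coe_zsmul]

theorem zsmulExtend_injective [Module.IsTorsionFree ℤ L] (h0 : n ≠ 0) :
    Function.Injective (e.zsmulExtend n hn) := by
  intro x y hxy
  simp only [zsmulExtend_apply, Subtype.coe_inj, EmbeddingLike.apply_eq_iff_eq, Subtype.mk.injEq]
    at hxy
  exact smul_right_injective L h0 hxy

theorem zsmulExtend_smul {W : Type*} [Monoid W] [DistribMulAction W L]
    (hC : ∀ (g : W), ∀ x ∈ C, g • x ∈ C)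
    (he : ∀ (g : W) (x : C), (e ⟨g • (x : L), hC g _ x.2⟩ : L) = g • (e x : L)) (g : W) (x : L) :
    e.zsmulExtend n hn (g • x) = g • e.zsmulExtend n hn x := by
  rw [zsmulExtend_apply, zsmulExtend_apply, ← he g ⟨n • x, hn x⟩]
  simp only [smul_comm n g x]

end AddEquiv

theorem stmt8_general (W₀ : Type*) [Group W₀]
    (L : Type*) [AddCommGroup L] [DistribMulAction W₀ L]
    [Module.Free ℤ L] [Nontrivial L]
    (hschur : ∀ f : (ℚ ⊗[ℤ] L) →ₗ[ℚ] (ℚ ⊗[ℤ] L),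
      (∀ g : W₀,
        f ∘ₗ LinearMap.baseChange ℚ ((DistribMulAction.toAddMonoidHom L g).toIntLinearMap)
          = LinearMap.baseChange ℚ ((DistribMulAction.toAddMonoidHom L g).toIntLinearMap) ∘ₗ f) →
      ∃ q : ℚ, f = q • LinearMap.id)
    (C C' : AddSubgroup L)
    (hC : ∀ (g : W₀), ∀ x ∈ C, g • x ∈ C)
    (hCi : C.index ≠ 0)
    (e : C ≃+ C')
    (he : ∀ (g : W₀) (x : C), (e ⟨g • (x : L), hC g _ x.2⟩ : L) = g • (e x : L)) :
    ∃ α β : ℤ, α ≠ 0 ∧ β ≠ 0 ∧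
      (fun x : L => α • x) '' (C : Set L) = (fun x : L => β • x) '' (C' : Set L) := by
  have hindex : (C.index : ℤ) ≠ 0 := by exact_mod_cast hCi
  have hn : ∀ x : L, (C.index : ℤ) • x ∈ C := fun x => by
    simpa only [natCast_zsmul] using C.nsmul_index_mem x
  set φ := e.zsmulExtend _ hn
  obtain ⟨q, hq⟩ := hschur (φ.baseChange ℚ) fun g => by
    rw [← LinearMap.baseChange_comp, ← LinearMap.baseChange_comp]
    congr 1
    ext x
    exact e.zsmulExtend_smul hn hC he g x
  have hscalar := LinearMap.den_zsmul_eq_num_zsmul_of_baseChange_eq_smul hq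
  have hden : (q.den : ℤ) ≠ 0 := by exact_mod_cast q.den_nz
  have hnum : q.num ≠ 0 := by
    obtain ⟨x, hx⟩ := exists_ne (0 : L)
    intro h
    have hφx : (q.den : ℤ) • φ x = 0 := by rw [hscalar, h, zero_smul]
    have : φ x = φ 0 := by rw [map_zero, (smul_eq_zero.mp hφx).resolve_left hden]
    exact hx (e.zsmulExtend_injective hn hindex this)
  refine ⟨q.num, q.den * C.index, hnum, mul_ne_zero hden hindex,
    e.image_zsmul_eq_of_zsmul_eq fun c => ?_⟩
  rw [← hscalar, e.zsmulExtend_apply_coe, mul_smul]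

theorem stmt8 (W₀ : Type*) [Group W₀] [Finite W₀]
    (L : Type*) [AddCommGroup L] [DistribMulAction W₀ L]
    [Module.Free ℤ L] [Module.Finite ℤ L] [Nontrivial L]
    (hschur : ∀ f : (ℚ ⊗[ℤ] L) →ₗ[ℚ] (ℚ ⊗[ℤ] L),
      (∀ g : W₀,
        f ∘ₗ LinearMap.baseChange ℚ ((DistribMulAction.toAddMonoidHom L g).toIntLinearMap)
          = LinearMap.baseChange ℚ ((DistribMulAction.toAddMonoidHom L g).toIntLinearMap) ∘ₗ f) →
      ∃ q : ℚ, f = q • LinearMap.id)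
    (C C' : AddSubgroup L)
    (hC : ∀ (g : W₀), ∀ x ∈ C, g • x ∈ C) (hC' : ∀ (g : W₀), ∀ x ∈ C', g • x ∈ C')
    (hCi : C.index ≠ 0) (hC'i : C'.index ≠ 0)
    (e : C ≃+ C')
    (he : ∀ (g : W₀) (x : C), (e ⟨g • (x : L), hC g _ x.2⟩ : L) = g • (e x : L)) :
    ∃ α β : ℤ, α ≠ 0 ∧ β ≠ 0 ∧
      (fun x : L => α • x) '' (C : Set L) = (fun x : L => β • x) '' (C' : Set L) :=
  stmt8_general W₀ L hschur C C' hC hCi e he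
end
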